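/- SPU maps are deterministically reasonable: let A, B, C be unital C*-algebras over ℂ, let ω : A → C and F : B → A be SPU maps, and let G : B → A be a unital ⋆-algebra homomorphism such that F b − G b ∈ N_ω for every b ∈ B (F is ω-a.e. equivalent to the deterministic map G). Then F is right ω-a.e. deterministic: F (star b * c) − star (F b) * F c ∈ N_ω for all b, c ∈ B. -/

import Mathlib

/-!
A Schwarz map `ω` is positive, so its right nullspace `N_ω` is a subspace and
`ω (star n * a) = ω (star a * n) = 0` for `n ∈ N_ω`. The Schwarz defect
`D b c = F (star b * c) - star (F b) * F c` is sesquilinear with `D b b ≥ 0`, and `ω (D b b) = 0`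
because `F` agrees modulo `N_ω` with the multiplicative map `G`. A positive element killed by `ω`
lies in `N_ω`, and polarization carries `D b b ∈ N_ω` over to `D b c ∈ N_ω`.
-/

open Filter Topology

section OrderedModule

variable {E : Type*} [AddCommGroup E] [PartialOrder E] [Module ℝ E] [TopologicalSpace E]
  [ClosedIciTopology E] [ContinuousAdd E] [ContinuousSMul ℝ E]

theorem nonneg_of_forall_pos_nonneg_add_smul {h q : E}
    (hyp : ∀ s : ℝ, 0 < s → 0 ≤ h + s • q) : 0 ≤ h := by
  have hlim : Tendsto (fun s : ℝ ↦ h + s • q) (𝓝[>] 0) (𝓝 h) := by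
    simpa using ((continuous_id.smul continuous_const).const_add h).continuousWithinAt
      (s := Set.Ioi (0 : ℝ)) (x := 0) |>.tendsto
  exact ge_of_tendsto hlim (eventually_nhdsWithin_of_forall hyp)

theorem eq_zero_of_forall_nonneg_smul_add_sq_smul [IsOrderedAddMonoid E] [PosSMulMono ℝ E]
    {h q : E} (hyp : ∀ r : ℝ, 0 ≤ r • h + r ^ 2 • q) : h = 0 := by
  have key : ∀ h : E, (∀ r : ℝ, 0 ≤ r • h + r ^ 2 • q) → 0 ≤ h := fun h hyp ↦
    nonneg_of_forall_pos_nonneg_add_smul fun s hs ↦ by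
      have := smul_nonneg (inv_nonneg.2 hs.le) (hyp s)
      rwa [smul_add, smul_smul, smul_smul, inv_mul_cancel₀ hs.ne', one_smul, sq,
        ← mul_assoc, inv_mul_cancel₀ hs.ne', one_mul] at this
  refine le_antisymm ?_ (key h hyp)
  rw [← neg_nonneg]
  exact key (-h) fun r ↦ by simpa using hyp (-r)

end OrderedModule

theorem LinearMap.apply_mem_of_forall_apply_self_mem {M N : Type*} [AddCommGroup M] [Module ℂ M]
    [AddCommGroup N] [Module ℂ N] (f : M →ₗ⋆[ℂ] M →ₗ[ℂ] N) {S : Submodule ℂ N}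
    (hf : ∀ x, f x x ∈ S) (x y : M) : f x y ∈ S := by
  have hsum : f x y + f y x ∈ S := by
    convert S.sub_mem (S.sub_mem (hf (x + y)) (hf x)) (hf y) using 1
    simp only [map_add, LinearMap.add_apply]
    abel
  have hdiff : f x y - f y x ∈ S := by
    rw [← S.smul_mem_iff Complex.I_ne_zero]
    convert S.sub_mem (S.sub_mem (hf (x + Complex.I • y)) (hf x)) (hf y) using 1
    simp only [map_add, map_smulₛₗ, LinearMap.add_apply, LinearMap.smul_apply,
      LinearMap.neg_apply, Complex.conj_I, RingHom.id_apply, smul_add, smul_smul, neg_smul,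
      smul_neg, Complex.I_mul_I]
    module
  rw [← S.smul_mem_iff (two_ne_zero (α := ℂ))]
  convert S.add_mem hsum hdiff using 1
  module

theorem map_nonneg_of_star_map_mul_map_le {A C F : Type*} [NonUnitalSemiring A] [PartialOrder A]
    [StarRing A] [StarOrderedRing A] [NonUnitalSemiring C] [PartialOrder C] [StarRing C]
    [StarOrderedRing C] [FunLike F A C] [AddMonoidHomClass F A C] (ω : F)
    (hω : ∀ a, star (ω a) * ω a ≤ ω (star a * a)) {x : A} (hx : 0 ≤ x) : 0 ≤ ω x := by
  rw [StarOrderedRing.nonneg_iff] at hx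
  induction hx using AddSubmonoid.closure_induction with
  | mem _ h => obtain ⟨a, rfl⟩ := h; exact (star_mul_self_nonneg _).trans (hω a)
  | zero => simp
  | add _ _ _ _ hx hy => rw [map_add]; exact add_nonneg hx hy

namespace PositiveLinearMap

variable {A C : Type*} [CStarAlgebra A] [PartialOrder A] [StarOrderedRing A]
  [CStarAlgebra C] [PartialOrder C] [StarOrderedRing C] (ω : A →ₚ[ℂ] C)

theorem map_star_mul_add_star_mul_eq_zero {n : A} (hn : ω (star n * n) = 0) (a : A) :
    ω (star n * a + star a * n) = 0 := by
  refine eq_zero_of_forall_nonneg_smul_add_sq_smul (q := ω (star a * a)) fun r ↦ ?_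
  have hexp : star (n + r • a) * (n + r • a)
      = star n * n + r • (star n * a + star a * n) + r ^ 2 • (star a * a) := by
    simp only [star_add, star_smul, star_trivial, add_mul, mul_add, smul_mul_assoc,
      mul_smul_comm, sq]
    module
  have h0 := ω.map_nonneg (star_mul_self_nonneg (n + r • a))
  rwa [hexp, map_add, map_add, map_smul_of_tower, map_smul_of_tower, hn, zero_add] at h0

theorem map_star_mul_eq_zero {n : A} (hn : ω (star n * n) = 0) (a : A) :
    ω (star n * a) = 0 := by
  -- testing against `a` and `I • a` separates the two cross terms
  have hsum := map_star_mul_add_star_mul_eq_zero ω hn a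
  have hdiff := map_star_mul_add_star_mul_eq_zero ω hn (Complex.I • a)
  simp only [star_smul, Complex.star_def, Complex.conj_I, neg_smul, neg_mul, mul_smul_comm,
    smul_mul_assoc, map_add, map_neg, map_smul] at hsum hdiff
  have : (2 * Complex.I) • ω (star n * a) = 0 := by
    linear_combination (norm := module) hdiff + Complex.I • hsum
  simpa using this

theorem map_star_mul_eq_zero' {n : A} (hn : ω (star n * n) = 0) (a : A) :
    ω (star a * n) = 0 := by
  have hsum := map_star_mul_add_star_mul_eq_zero ω hn a
  rwa [map_add, map_star_mul_eq_zero ω hn, zero_add] at hsum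

def rightNullspace : Submodule ℂ A where
  carrier := {a | ω (star a * a) = 0}
  add_mem' {u v} hu hv := by
    have hexp : star (u + v) * (u + v) = star u * u + (star u * v + star v * u) + star v * v := by
      rw [star_add]
      noncomm_ring
    simp only [Set.mem_ofPred_eq] at hu hv ⊢
    rw [hexp, map_add, map_add, hu, hv, map_star_mul_add_star_mul_eq_zero ω hu, add_zero,
      add_zero]
  zero_mem' := by simp
  smul_mem' c u hu := by
    simp only [Set.mem_ofPred_eq] at hu ⊢
    rw [star_smul, smul_mul_smul_comm, map_smul, hu, smul_zero]

theorem mem_rightNullspace {a : A} : a ∈ ω.rightNullspace ↔ ω (star a * a) = 0 := Iff.rfl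

theorem map_eq_of_sub_mem_rightNullspace {x y : A} (h : x - y ∈ ω.rightNullspace) :
    ω x = ω y := by
  have := map_star_mul_eq_zero' ω h 1
  rwa [star_one, one_mul, map_sub, sub_eq_zero] at this

theorem map_star_mul_self_eq_of_sub_mem_rightNullspace {x y : A}
    (h : x - y ∈ ω.rightNullspace) : ω (star x * x) = ω (star y * y) := by
  have hexp : star x * x = star y * y + (star (x - y) * x + star y * (x - y)) := by
    rw [star_sub]
    noncomm_ring
  rw [hexp, map_add, map_add, map_star_mul_eq_zero ω h, map_star_mul_eq_zero' ω h, add_zero,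
    add_zero]

theorem mem_rightNullspace_of_nonneg {x : A} (hx : 0 ≤ x) (h : ω x = 0) :
    x ∈ ω.rightNullspace := by
  obtain ⟨b, rfl⟩ := CStarAlgebra.nonneg_iff_eq_star_mul_self.1 hx
  have hexp : star (star b * b) * (star b * b) = star (b * star b * b) * b := by
    simp only [star_mul, star_star, mul_assoc]
  rw [mem_rightNullspace, hexp]
  exact map_star_mul_eq_zero' ω h _

end PositiveLinearMap

section SchwarzDefect

variable {A B : Type*}
  [Ring A] [StarRing A] [Module ℂ A] [StarModule ℂ A] [SMulCommClass ℂ A A] [IsScalarTower ℂ A A]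
  [Ring B] [StarRing B] [Module ℂ B] [StarModule ℂ B] [SMulCommClass ℂ B B] [IsScalarTower ℂ B B]

def LinearMap.schwarzDefect (F : B →ₗ[ℂ] A) : B →ₗ⋆[ℂ] B →ₗ[ℂ] A :=
  LinearMap.mk₂'ₛₗ (starRingEnd ℂ) (RingHom.id ℂ) (fun b c ↦ F (star b * c) - star (F b) * F c)
    (fun b b' c ↦ by simp only [star_add, add_mul, map_add]; abel)
    (fun z b c ↦ by simp only [star_smul, Complex.star_def, smul_mul_assoc, map_smul, smul_sub])
    (fun b c c' ↦ by simp only [mul_add, map_add]; abel)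
    (fun z b c ↦ by simp only [mul_smul_comm, map_smul, smul_sub, RingHom.id_apply])

theorem LinearMap.schwarzDefect_apply (F : B →ₗ[ℂ] A) (b c : B) :
    F.schwarzDefect b c = F (star b * c) - star (F b) * F c :=
  rfl

end SchwarzDefect

theorem spu_deterministically_reasonable_general
    {A B C : Type*}
    [CStarAlgebra A] [PartialOrder A] [StarOrderedRing A]
    [CStarAlgebra B]
    [CStarAlgebra C] [PartialOrder C] [StarOrderedRing C]
    (ω : A →ₗ[ℂ] C)
    (hωKS : ∀ a : A, star (ω a) * ω a ≤ ω (star a * a))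
    (F : B →ₗ[ℂ] A)
    (hFKS : ∀ b : B, star (F b) * F b ≤ F (star b * b))
    (G : B →ₗ[ℂ] A)
    (hGmul : ∀ b b' : B, G (b * b') = G b * G b')
    (hGstar : ∀ b : B, G (star b) = star (G b))
    (hae : ∀ b : B, ω (star (F b - G b) * (F b - G b)) = 0) :
    ∀ b c : B,
      ω (star (F (star b * c) - star (F b) * F c) * (F (star b * c) - star (F b) * F c)) = 0 := by
  let ωpos : A →ₚ[ℂ] C := .mk₀ ω fun _ ↦ map_nonneg_of_star_map_mul_map_le ω hωKS
  have hFG (b : B) : F b - G b ∈ ωpos.rightNullspace := hae b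
  have hdiag (b : B) : F.schwarzDefect b b ∈ ωpos.rightNullspace := by
    refine ωpos.mem_rightNullspace_of_nonneg (sub_nonneg.2 (hFKS b)) ?_
    rw [F.schwarzDefect_apply, map_sub, ωpos.map_eq_of_sub_mem_rightNullspace (hFG _), hGmul,
      hGstar, ωpos.map_star_mul_self_eq_of_sub_mem_rightNullspace (hFG b), sub_self]
  exact F.schwarzDefect.apply_mem_of_forall_apply_self_mem hdiag

/-- **SPU maps are deterministically reasonable.** Let `ω : A → C` and `F : B → A` be SPU maps
between unital C*-algebras over `ℂ`, and let `G : B → A` be a unital ⋆-algebra homomorphism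
with `F b - G b` in the right nullspace `N_ω` for every `b` (so `F` is `ω`-a.e. equivalent to
the deterministic map `G`). Then `F` is right `ω`-a.e. deterministic. -/
theorem spu_deterministically_reasonable
    {A B C : Type*}
    [CStarAlgebra A] [PartialOrder A] [StarOrderedRing A]
    [CStarAlgebra B]
    [CStarAlgebra C] [PartialOrder C] [StarOrderedRing C]
    (ω : A →ₗ[ℂ] C) (hω1 : ω 1 = 1)
    (hωKS : ∀ a : A, star (ω a) * ω a ≤ ω (star a * a))
    (F : B →ₗ[ℂ] A) (hF1 : F 1 = 1)
    (hFKS : ∀ b : B, star (F b) * F b ≤ F (star b * b))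
    (G : B →ₗ[ℂ] A) (hG1 : G 1 = 1)
    (hGmul : ∀ b b' : B, G (b * b') = G b * G b')
    (hGstar : ∀ b : B, G (star b) = star (G b))
    (hae : ∀ b : B, ω (star (F b - G b) * (F b - G b)) = 0) :
    ∀ b c : B,
      ω (star (F (star b * c) - star (F b) * F c) * (F (star b * c) - star (F b) * F c)) = 0 :=
  spu_deterministically_reasonable_general ω hωKS F hFKS G hGmul hGstar hae
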